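/- arXiv:2203.06729 — 4 statements merged into one kernel-verified Lean document; each statement's English description precedes it below -/
import Mathlib

section
/- Let Q be a monic polynomial of degree t over F_q, let ℓ ≥ 0, let ε be a Hayes equivalence class with respect to (ℓ,Q), and let D ⊆ F_q contain no zero of Q, with n = |D|. Then for all integers k ≥ 0 and 0 ≤ r ≤ k, |P(Y_k(ε)=r) − C(n,r)·(1/q)^r·(1−1/q)^{n−r}| ≤ (2/(k−r)!)·C(n,r)·(1/q)^r. In particular, as k−r → ∞, P(Y_k(ε)=r) ∼ C(n,r)·(1/q)^r·(1−1/q)^{n−r}, i.e. the number of distinct zeros in D of a random polynomial in the class is asymptotically binomial. -/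
open Polynomial

noncomputable section

/-- Hayes equivalence with respect to `ℓ` and a monic polynomial `Q`:
both polynomials are coprime to `Q`, their reversals agree modulo `x^(ℓ+1)`,
and they agree modulo `Q`. -/
def HayesEquiv {Fq : Type*} [Field Fq] (ℓ : ℕ) (Q f g : Polynomial Fq) : Prop :=
  IsCoprime f Q ∧ IsCoprime g Q ∧
    (X : Polynomial Fq) ^ (ℓ + 1) ∣ f.reverse - g.reverse ∧ Q ∣ f - g

/-- `P(Y_k(ε) = r)`: the probability that a uniformly random monic polynomial of degree
`k + t + ℓ` in the Hayes class of `ε` has exactly `r` distinct zeros in `D`. -/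
def probY {Fq : Type*} [Field Fq] [Fintype Fq] [DecidableEq Fq] (ℓ : ℕ)
    (Q ε : Polynomial Fq) (D : Finset Fq) (k r : ℕ) : ℝ :=
  (Nat.card {f : Polynomial Fq // f.Monic ∧ f.natDegree = k + Q.natDegree + ℓ ∧
      HayesEquiv ℓ Q ε f ∧ (D.filter fun x => f.eval x = 0).card = r} : ℝ) /
    (Fintype.card Fq : ℝ) ^ k

/-!
Write `Y(f)` for the number of zeros of `f` in `D`. The polynomials of the class vanishing on a
set `S ⊆ D` of size `s ≤ k` again form a Hayes class, for the modulus `Q · ∏_{x ∈ S} (X - x)`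
(Chinese remainder theorem), so there are exactly `q^(k-s)` of them. Summing over `S`, the binomial
moments `E[C(Y, s)]` for `s ≤ k` equal `C(n, s) q^(-s)`, those of the binomial law `Bin(n, 1/q)`.
By the Bonferroni inequalities, `P(Y = r)` lies between consecutive truncations of the
inclusion–exclusion series `∑_s (-1)^(s-r) C(s, r) E[C(Y, s)]`, so two laws sharing their first
`k` binomial moments differ at `r` by at most `C(k, r) C(n, k) q^(-k) ≤ C(n, r) q^(-r) / (k-r)!`.
-/

open Finset

theorem Nat.choose_mul_add_choose (j r i : ℕ) :
    (r + i).choose r * j.choose (r + i) = j.choose r * (j - r).choose i := by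
  rw [mul_comm, Nat.choose_mul (Nat.le_add_right r i), Nat.add_sub_cancel_left]

theorem alternating_sum_range_choose_bounds (m u : ℕ) :
    0 ≤ (-1 : ℝ) ^ u * (∑ i ∈ range (u + 1), (-1 : ℝ) ^ i * m.choose i - if m = 0 then 1 else 0) ∧
      (-1 : ℝ) ^ u * (∑ i ∈ range (u + 1), (-1 : ℝ) ^ i * m.choose i - if m = 0 then 1 else 0) ≤
        m.choose u := by
  cases m with
  | zero =>
    rw [sum_range_succ', sum_eq_zero fun i _ => by simp]
    simp
  | succ m =>
    have h := congrArg (Int.cast : ℤ → ℝ)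
      (Int.alternating_sum_range_choose_eq_choose (n := m) (m := u))
    push_cast at h
    rw [h, if_neg m.succ_ne_zero, sub_zero, ← mul_assoc, ← pow_add, ← two_mul, pow_mul]
    norm_num
    exact_mod_cast Nat.choose_le_choose u m.le_succ

theorem bonferroni_pointwise (r u j : ℕ) :
    0 ≤ (-1 : ℝ) ^ u * (∑ i ∈ range (u + 1), (-1 : ℝ) ^ i * ((r + i).choose r * j.choose (r + i))
        - if j = r then 1 else 0) ∧
      (-1 : ℝ) ^ u * (∑ i ∈ range (u + 1), (-1 : ℝ) ^ i * ((r + i).choose r * j.choose (r + i))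
        - if j = r then 1 else 0) ≤ (r + u).choose r * j.choose (r + u) := by
  simp_rw [← Nat.cast_mul, Nat.choose_mul_add_choose]
  rcases lt_or_ge j r with hj | hj
  · simp [Nat.choose_eq_zero_of_lt hj, hj.ne]
  obtain ⟨m, rfl⟩ := Nat.exists_eq_add_of_le hj
  have hite : (if r + m = r then (1 : ℝ) else 0) = (r + m).choose r * if m = 0 then 1 else 0 := by
    split_ifs <;> simp_all
  obtain ⟨h0, h1⟩ := alternating_sum_range_choose_bounds m u
  have hc : (0 : ℝ) ≤ (r + m).choose r := Nat.cast_nonneg _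
  push_cast
  simp only [Nat.add_sub_cancel_left, hite, mul_left_comm _ (((r + m).choose r : ℕ) : ℝ),
    ← mul_sum, ← mul_sub]
  exact ⟨mul_nonneg hc h0, mul_le_mul_of_nonneg_left h1 hc⟩

def binomialMoment {α : Type*} (W : Finset α) (w : α → ℝ) (X : α → ℕ) (s : ℕ) : ℝ :=
  ∑ a ∈ W, w a * (X a).choose s

theorem bonferroni_inequalities {α : Type*} (W : Finset α) (w : α → ℝ) (X : α → ℕ)
    (hw : ∀ a ∈ W, 0 ≤ w a) (r u : ℕ) :
    0 ≤ (-1 : ℝ) ^ u * (∑ i ∈ range (u + 1), (-1 : ℝ) ^ i * (r + i).choose r *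
        binomialMoment W w X (r + i) - ∑ a ∈ W with X a = r, w a) ∧
      (-1 : ℝ) ^ u * (∑ i ∈ range (u + 1), (-1 : ℝ) ^ i * (r + i).choose r *
        binomialMoment W w X (r + i) - ∑ a ∈ W with X a = r, w a) ≤
        (r + u).choose r * binomialMoment W w X (r + u) := by
  have hsum : (-1 : ℝ) ^ u * (∑ i ∈ range (u + 1), (-1 : ℝ) ^ i * (r + i).choose r *
        binomialMoment W w X (r + i) - ∑ a ∈ W with X a = r, w a) =
      ∑ a ∈ W, w a * ((-1 : ℝ) ^ u * (∑ i ∈ range (u + 1),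
        (-1 : ℝ) ^ i * ((r + i).choose r * (X a).choose (r + i)) - if X a = r then 1 else 0)) := by
    simp only [binomialMoment, sum_filter, mul_sum, mul_sub, sum_sub_distrib, mul_ite, mul_one,
      mul_zero]
    rw [sum_comm]
    congr 1 <;> refine sum_congr rfl fun _ _ => ?_
    · exact sum_congr rfl fun _ _ => by ring
    · split_ifs <;> ring
  have hbound : (r + u).choose r * binomialMoment W w X (r + u) =
      ∑ a ∈ W, w a * ((r + u).choose r * (X a).choose (r + u)) := by
    simp only [binomialMoment, mul_sum]
    exact sum_congr rfl fun _ _ => by ring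
  rw [hsum, hbound]
  exact ⟨sum_nonneg fun a ha => mul_nonneg (hw a ha) (bonferroni_pointwise r u (X a)).1,
    sum_le_sum fun a ha => mul_le_mul_of_nonneg_left (bonferroni_pointwise r u (X a)).2 (hw a ha)⟩

theorem abs_sub_le_of_binomialMoment_eq {α β : Type*} {W₁ : Finset α} {w₁ : α → ℝ}
    {X₁ : α → ℕ} {W₂ : Finset β} {w₂ : β → ℝ} {X₂ : β → ℕ} (hw₁ : ∀ a ∈ W₁, 0 ≤ w₁ a)
    (hw₂ : ∀ b ∈ W₂, 0 ≤ w₂ b) (r u : ℕ)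
    (h : ∀ s ≤ r + u, binomialMoment W₁ w₁ X₁ s = binomialMoment W₂ w₂ X₂ s) :
    |∑ a ∈ W₁ with X₁ a = r, w₁ a - ∑ b ∈ W₂ with X₂ b = r, w₂ b| ≤
      (r + u).choose r * binomialMoment W₁ w₁ X₁ (r + u) := by
  obtain ⟨h₁, h₁'⟩ := bonferroni_inequalities W₁ w₁ X₁ hw₁ r u
  obtain ⟨h₂, h₂'⟩ := bonferroni_inequalities W₂ w₂ X₂ hw₂ r u
  rw [sum_congr rfl fun i hi => by rw [h (r + i) (by simp at hi; omega)]] at h₁ h₁'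
  rw [← h (r + u) le_rfl] at h₂'
  rw [abs_le]
  rcases neg_one_pow_eq_or ℝ u with hσ | hσ <;> rw [hσ] at h₁ h₁' h₂ h₂' <;>
    constructor <;> linarith

theorem binomialMoment_card_eq {α β : Type*} [DecidableEq β] (W : Finset α) (w : α → ℝ)
    (Z : α → Finset β) (D : Finset β) (hZ : ∀ a ∈ W, Z a ⊆ D) (s : ℕ) (p : ℝ)
    (h : ∀ S ⊆ D, #S = s → ∑ a ∈ W with S ⊆ Z a, w a = p ^ s) :
    binomialMoment W w (fun a => #(Z a)) s = (#D).choose s * p ^ s := by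
  have hcount : ∀ a ∈ W, ((#(Z a)).choose s : ℝ) =
      ∑ S ∈ D.powersetCard s, if S ⊆ Z a then 1 else 0 := by
    intro a ha
    have hfilter : {S ∈ D.powersetCard s | S ⊆ Z a} = (Z a).powersetCard s := by
      ext S
      simp only [mem_filter, mem_powersetCard]
      exact ⟨fun ⟨⟨_, hS⟩, hSZ⟩ => ⟨hSZ, hS⟩, fun ⟨hSZ, hS⟩ => ⟨⟨hSZ.trans (hZ a ha), hS⟩, hSZ⟩⟩
    rw [sum_boole, hfilter, card_powersetCard]
  calc binomialMoment W w (fun a => #(Z a)) s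
      = ∑ S ∈ D.powersetCard s, ∑ a ∈ W with S ⊆ Z a, w a := by
        simp only [binomialMoment, sum_filter]
        rw [sum_comm]
        refine sum_congr rfl fun a ha => ?_
        rw [hcount a ha, mul_sum]
        simp
    _ = (#D).choose s * p ^ s := by
        rw [sum_congr rfl fun S hS => h S (mem_powersetCard.1 hS).1 (mem_powersetCard.1 hS).2,
          sum_const, card_powersetCard, nsmul_eq_mul]

theorem sum_superset_pow_mul_one_sub_pow {β : Type*} [DecidableEq β] {D S : Finset β}
    (hS : S ⊆ D) (p : ℝ) :
    ∑ A ∈ D.powerset with S ⊆ A, p ^ #A * (1 - p) ^ (#D - #A) = p ^ #S := by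
  have hprod := prod_add (fun _ => p) (fun i => if i ∈ S then 0 else 1 - p) D
  have hlhs : ∏ i ∈ D, (p + if i ∈ S then 0 else 1 - p) = p ^ #S := by
    rw [prod_congr rfl fun i _ => show (p + if i ∈ S then 0 else 1 - p) =
      if i ∈ S then p else 1 by split_ifs <;> ring, prod_ite_mem, inter_eq_right.2 hS, prod_const]
  have hcompl : ∀ A ∈ D.powerset, ∏ i ∈ D \ A, (if i ∈ S then 0 else 1 - p) =
      if S ⊆ A then (1 - p) ^ (#D - #A) else 0 := by
    intro A hA
    split_ifs with hSA
    · rw [prod_congr rfl fun i hi => if_neg fun hiS => (mem_sdiff.1 hi).2 (hSA hiS), prod_const,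
        card_sdiff_of_subset (mem_powerset.1 hA)]
    · obtain ⟨i, hiS, hiA⟩ := not_subset.1 hSA
      exact prod_eq_zero (mem_sdiff.2 ⟨hS hiS, hiA⟩) (if_pos hiS)
  simp only [prod_const] at hprod
  rw [← hlhs, hprod, sum_filter]
  exact sum_congr rfl fun A hA => by rw [hcompl A hA, mul_ite, mul_zero]

theorem sum_powerset_card_eq {β : Type*} (D : Finset β) (p : ℝ) (r : ℕ) :
    ∑ A ∈ D.powerset with #A = r, p ^ #A * (1 - p) ^ (#D - #A) =
      (#D).choose r * p ^ r * (1 - p) ^ (#D - r) := by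
  rw [← powersetCard_eq_filter, sum_congr rfl fun A hA => by rw [(mem_powersetCard.1 hA).2],
    sum_const, card_powersetCard, nsmul_eq_mul, mul_assoc]

theorem binomialMoment_powerset {β : Type*} [DecidableEq β] (D : Finset β) (p : ℝ) (s : ℕ) :
    binomialMoment D.powerset (fun A => p ^ #A * (1 - p) ^ (#D - #A)) card s =
      (#D).choose s * p ^ s :=
  binomialMoment_card_eq _ _ id D (fun _ => mem_powerset.1) s p fun _ hSD hS =>
    hS ▸ sum_superset_pow_mul_one_sub_pow hSD p

theorem choose_mul_choose_mul_inv_pow_le {n r k : ℕ} {q : ℝ} (hq : 0 < q) (hnq : (n : ℝ) ≤ q)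
    (hrk : r ≤ k) :
    (k.choose r : ℝ) * n.choose k * (1 / q) ^ k ≤ n.choose r * (1 / q) ^ r / (k - r).factorial := by
  have hnr : ((n - r : ℕ) : ℝ) ≤ q := (Nat.cast_le.2 (n.sub_le r)).trans hnq
  calc (k.choose r : ℝ) * n.choose k * (1 / q) ^ k
      = n.choose r * (n - r).choose (k - r) * (1 / q) ^ k := by
        rw [mul_comm (k.choose r : ℝ), ← Nat.cast_mul, Nat.choose_mul hrk, Nat.cast_mul]
    _ ≤ n.choose r * (q ^ (k - r) / (k - r).factorial) * (1 / q) ^ k := by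
        gcongr
        exact (Nat.choose_le_pow_div _ _).trans (by gcongr)
    _ = n.choose r * (1 / q) ^ r / (k - r).factorial := by
        rw [pow_sub₀ _ hq.ne' hrk, one_div, inv_pow, inv_pow]
        field_simp

section HayesSet

variable {K : Type*} [Field K]

/-- For `a = ε` and `R = ε.reverse` this is the paper's `M_N(ε)`; general targets `a`, `R` let
vanishing conditions be absorbed into the modulus (`hayesSet_vanishing_eq`). -/
def hayesSet (ℓ : ℕ) (Q a R : K[X]) (N : ℕ) : Set K[X] :=
  {f | f.Monic ∧ f.natDegree = N ∧ X ^ (ℓ + 1) ∣ f.reverse - R ∧ Q ∣ f - a}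

theorem coeff_sum_monomial_sub {ℓ N j : ℕ} (hℓ : ℓ ≤ N) (R : K[X]) (hj : N - ℓ ≤ j) :
    (∑ i ∈ range (ℓ + 1), monomial (N - i) (R.coeff i)).coeff j =
      if j ≤ N then R.coeff (N - j) else 0 := by
  simp only [finsetSum_coeff, coeff_monomial]
  split_ifs with hjN
  · rw [sum_eq_single (N - j) (fun i hi hne => if_neg (by simp at hi; omega))
      (fun h => absurd (mem_range.2 (by omega)) h), if_pos (by omega)]
  · exact sum_eq_zero fun i _ => if_neg (by omega)

theorem monic_natDegree_dvd_reverse_sub_iff {ℓ N : ℕ} {f R : K[X]} (hℓ : ℓ ≤ N)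
    (hR : R.coeff 0 = 1) :
    (f.Monic ∧ f.natDegree = N ∧ X ^ (ℓ + 1) ∣ f.reverse - R) ↔
      f - ∑ i ∈ range (ℓ + 1), monomial (N - i) (R.coeff i) ∈ degreeLT K (N - ℓ) := by
  simp only [mem_degreeLT, degree_lt_iff_coeff_zero, coeff_sub, sub_eq_zero]
  constructor
  · rintro ⟨-, hd, hdvd⟩ j hj
    rw [coeff_sum_monomial_sub hℓ R hj]
    split_ifs with hjN
    · have := X_pow_dvd_iff.1 hdvd (N - j) (by omega)
      rwa [coeff_sub, sub_eq_zero, coeff_reverse, hd, revAt_le (by omega),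
        Nat.sub_sub_self hjN] at this
    · exact coeff_eq_zero_of_natDegree_lt (by omega)
  · intro h
    replace h : ∀ j, N - ℓ ≤ j → f.coeff j = if j ≤ N then R.coeff (N - j) else 0 :=
      fun j hj => (h j hj).trans (coeff_sum_monomial_sub hℓ R hj)
    have hN : f.coeff N = 1 := by simpa [hR] using h N (by omega)
    have hdeg : f.natDegree ≤ N :=
      natDegree_le_iff_coeff_eq_zero.2 fun j hj => by simpa [hj.not_ge] using h j (by omega)
    have hd : f.natDegree = N := le_antisymm hdeg (le_natDegree_of_ne_zero (by simp [hN]))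
    refine ⟨monic_of_natDegree_le_of_coeff_eq_one N hdeg hN, hd, X_pow_dvd_iff.2 fun i hi => ?_⟩
    rw [coeff_sub, sub_eq_zero, coeff_reverse, hd, revAt_le (by omega), h _ (by omega),
      if_pos (by omega), Nat.sub_sub_self (by omega)]

theorem mul_mem_degreeLT_iff {Q p : K[X]} (hQ : Q.Monic) (m : ℕ) :
    Q * p ∈ degreeLT K (Q.natDegree + m) ↔ p ∈ degreeLT K m := by
  rcases eq_or_ne p 0 with rfl | hp
  · simp
  rw [mem_degreeLT, mem_degreeLT, degree_mul, degree_eq_natDegree hQ.ne_zero,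
    degree_eq_natDegree hp]
  norm_cast
  omega

theorem hayesSet_eq_range {ℓ N : ℕ} {Q R : K[X]} (a : K[X]) (hQ : Q.Monic)
    (hR : R.coeff 0 = 1) (hN : Q.natDegree + ℓ ≤ N) :
    ∃ T, hayesSet ℓ Q a R N =
      Set.range fun p : degreeLT K (N - Q.natDegree - ℓ) => T + Q * (p : K[X]) := by
  -- `RN` fixes the top `ℓ + 1` coefficients; the correction `w`, of degree `< Q.natDegree ≤ N - ℓ`,
  -- fixes the residue mod `Q` without touching them.
  set RN := ∑ i ∈ range (ℓ + 1), monomial (N - i) (R.coeff i)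
  set w := (a - RN) %ₘ Q
  have hw : w ∈ degreeLT K (N - ℓ) := by
    refine mem_degreeLT.2 ((degree_modByMonic_lt _ hQ).trans_le ?_)
    rw [degree_eq_natDegree hQ.ne_zero]
    exact_mod_cast (by omega : Q.natDegree ≤ N - ℓ)
  have hTa : Q ∣ RN + w - a :=
    ⟨-((a - RN) /ₘ Q), by linear_combination modByMonic_add_div (a - RN) Q⟩
  refine ⟨RN + w, Set.ext fun f => ?_⟩
  have hsplit : N - ℓ = Q.natDegree + (N - Q.natDegree - ℓ) := by omega
  simp only [hayesSet, Set.mem_ofPred_eq, ← and_assoc, monic_natDegree_dvd_reverse_sub_iff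
    (by omega : ℓ ≤ N) hR, Set.mem_range]
  rw [← Submodule.sub_mem_iff_left _ hw, ← dvd_sub_left hTa, sub_sub, sub_sub_sub_cancel_right,
    hsplit]
  constructor
  · rintro ⟨hdeg, d, hd⟩
    rw [hd, mul_mem_degreeLT_iff hQ] at hdeg
    exact ⟨⟨d, hdeg⟩, by rw [← hd]; ring⟩
  · rintro ⟨p, rfl⟩
    rw [add_sub_cancel_left]
    exact ⟨(mul_mem_degreeLT_iff hQ _).2 p.2, dvd_mul_right _ _⟩

theorem ncard_hayesSet {ℓ N : ℕ} {Q R : K[X]} (a : K[X]) (hQ : Q.Monic) (hR : R.coeff 0 = 1)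
    (hN : Q.natDegree + ℓ ≤ N) :
    (hayesSet ℓ Q a R N).ncard = Nat.card K ^ (N - Q.natDegree - ℓ) := by
  obtain ⟨T, hT⟩ := hayesSet_eq_range a hQ hR hN
  rw [hT, Set.ncard_range_of_injective fun p₁ p₂ h =>
      Subtype.ext (mul_left_cancel₀ hQ.ne_zero (add_left_cancel h)),
    Nat.card_congr (degreeLTEquiv K _).toEquiv, Nat.card_fun, Nat.card_fin]

theorem hayesSet_finite [Finite K] {ℓ N : ℕ} {Q R : K[X]} (a : K[X]) (hQ : Q.Monic)
    (hR : R.coeff 0 = 1) (hN : Q.natDegree + ℓ ≤ N) : (hayesSet ℓ Q a R N).Finite := by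
  obtain ⟨T, hT⟩ := hayesSet_eq_range a hQ hR hN
  have := Finite.of_equiv _ (degreeLTEquiv K (N - Q.natDegree - ℓ)).toEquiv.symm
  rw [hT]
  exact Set.finite_range _

theorem prod_X_sub_C_dvd_iff {f : K[X]} (S : Finset K) :
    ∏ x ∈ S, (X - C x) ∣ f ↔ ∀ x ∈ S, f.eval x = 0 := by
  refine ⟨fun h x hx => ?_, fun h => ?_⟩
  · exact dvd_iff_isRoot.1 ((dvd_prod_of_mem (fun x => X - C x) hx).trans h)
  · exact prod_dvd_of_coprime ((pairwise_coprime_X_sub_C Function.injective_id).set_pairwise _)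
      fun x hx => dvd_iff_isRoot.2 (h x hx)

theorem hayesSet_vanishing_eq {ℓ N : ℕ} {Q R : K[X]} (a : K[X]) (S : Finset K)
    (hS : ∀ x ∈ S, Q.eval x ≠ 0) :
    ∃ b, {f ∈ hayesSet ℓ Q a R N | ∀ x ∈ S, f.eval x = 0} =
      hayesSet ℓ (Q * ∏ x ∈ S, (X - C x)) b R N := by
  set h := ∏ x ∈ S, (X - C x)
  have hcop : IsCoprime h Q := IsCoprime.prod_left fun x hx =>
    (irreducible_X_sub_C x).coprime_iff_not_dvd.2 (mt dvd_iff_isRoot.1 (hS x hx))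
  obtain ⟨u, v, huv⟩ := id hcop
  -- `b = a u h` is `≡ a (mod Q)` and `≡ 0 (mod h)`.
  have hQb : Q ∣ a * u * h - a := ⟨-(a * v), by linear_combination a * huv⟩
  have hmul : ∀ g, Q ∣ g ∧ h ∣ g ↔ Q * h ∣ g := fun g =>
    ⟨fun ⟨hQ, hh⟩ => hcop.symm.mul_dvd hQ hh,
      fun hd => ⟨dvd_of_mul_right_dvd hd, dvd_of_mul_left_dvd hd⟩⟩
  refine ⟨a * u * h, Set.ext fun f => ?_⟩
  simp only [hayesSet, Set.mem_ofPred_eq, ← prod_X_sub_C_dvd_iff]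
  rw [← dvd_sub_left (dvd_mul_left h (a * u)), ← dvd_sub_left hQb, sub_sub_sub_cancel_right,
    ← hmul]
  tauto

theorem ncard_hayesSet_vanishing {ℓ N : ℕ} {Q R : K[X]} (a : K[X]) (hQ : Q.Monic)
    (hR : R.coeff 0 = 1) (S : Finset K) (hS : ∀ x ∈ S, Q.eval x ≠ 0)
    (hN : Q.natDegree + #S + ℓ ≤ N) :
    {f ∈ hayesSet ℓ Q a R N | ∀ x ∈ S, f.eval x = 0}.ncard =
      Nat.card K ^ (N - Q.natDegree - #S - ℓ) := by
  have hmonic : (∏ x ∈ S, (X - C x)).Monic := monic_prod_of_monic _ _ fun x _ => monic_X_sub_C x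
  have hdeg : (Q * ∏ x ∈ S, (X - C x)).natDegree = Q.natDegree + #S := by
    rw [hQ.natDegree_mul hmonic, natDegree_prod_of_monic _ _ fun x _ => monic_X_sub_C x]
    simp
  obtain ⟨b, hb⟩ := hayesSet_vanishing_eq (ℓ := ℓ) (N := N) (R := R) a S hS
  rw [hb, ncard_hayesSet b (hQ.mul hmonic) hR (by omega), hdeg]
  congr 1
  omega

theorem hayesEquiv_iff {ℓ : ℕ} {Q ε f : K[X]} (hεQ : IsCoprime ε Q) :
    HayesEquiv ℓ Q ε f ↔ X ^ (ℓ + 1) ∣ f.reverse - ε.reverse ∧ Q ∣ f - ε := by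
  rw [HayesEquiv, dvd_sub_comm, dvd_sub_comm (b := ε)]
  refine ⟨fun h => h.2.2, fun ⟨hrev, c, hc⟩ => ⟨hεQ, ?_, hrev, c, hc⟩⟩
  rw [sub_eq_iff_eq_add'.1 hc]
  exact hεQ.add_mul_left_left c

end HayesSet

section HayesModel

variable {Fq : Type*} [Field Fq] [Fintype Fq] [DecidableEq Fq]

theorem probY_eq_sum {ℓ : ℕ} {Q ε : Fq[X]} (hεQ : IsCoprime ε Q) (D : Finset Fq) (k r : ℕ)
    (hW : (hayesSet ℓ Q ε ε.reverse (k + Q.natDegree + ℓ)).Finite) :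
    probY ℓ Q ε D k r =
      ∑ f ∈ hW.toFinset with #{x ∈ D | f.eval x = 0} = r, ((Fintype.card Fq : ℝ) ^ k)⁻¹ := by
  rw [probY, sum_const, nsmul_eq_mul, div_eq_mul_inv, ← Nat.card_eq_finsetCard]
  congr 2
  refine Nat.card_congr (Equiv.subtypeEquivRight fun f => ?_)
  simp [hayesSet, hayesEquiv_iff hεQ, and_assoc]

theorem sum_hayesSet_vanishing {ℓ : ℕ} {Q ε : Fq[X]} (hQ : Q.Monic) (hε : ε.Monic) {D : Finset Fq}
    (hD : ∀ x ∈ D, Q.eval x ≠ 0) {k : ℕ}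
    (hW : (hayesSet ℓ Q ε ε.reverse (k + Q.natDegree + ℓ)).Finite) {S : Finset Fq} (hSD : S ⊆ D)
    (hSk : #S ≤ k) :
    ∑ f ∈ hW.toFinset with S ⊆ {x ∈ D | f.eval x = 0}, ((Fintype.card Fq : ℝ) ^ k)⁻¹ =
      (1 / (Fintype.card Fq : ℝ)) ^ #S := by
  have hR : ε.reverse.coeff 0 = 1 := by rw [coeff_zero_reverse, hε.leadingCoeff]
  have hcard : #{f ∈ hW.toFinset | S ⊆ {x ∈ D | f.eval x = 0}} =
      {f ∈ hayesSet ℓ Q ε ε.reverse (k + Q.natDegree + ℓ) | ∀ x ∈ S, f.eval x = 0}.ncard := by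
    rw [← Set.ncard_coe_finset, coe_filter]
    congr 1
    ext f
    simp only [Set.Finite.mem_toFinset, subset_iff, mem_filter]
    exact and_congr_right fun _ => forall₂_congr fun x hx => and_iff_right (hSD hx)
  rw [sum_const, nsmul_eq_mul, hcard, ncard_hayesSet_vanishing ε hQ hR S (fun x hx => hD x (hSD hx))
    (by omega), Nat.card_eq_fintype_card]
  have hq : (Fintype.card Fq : ℝ) ≠ 0 := by exact_mod_cast Fintype.card_ne_zero
  rw [show k + Q.natDegree + ℓ - Q.natDegree - #S - ℓ = k - #S by omega, Nat.cast_pow,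
    pow_sub₀ _ hq hSk, one_div, inv_pow]
  field_simp

theorem binomialMoment_hayesSet {ℓ : ℕ} {Q ε : Fq[X]} (hQ : Q.Monic) (hε : ε.Monic)
    {D : Finset Fq} (hD : ∀ x ∈ D, Q.eval x ≠ 0) {k : ℕ}
    (hW : (hayesSet ℓ Q ε ε.reverse (k + Q.natDegree + ℓ)).Finite) {s : ℕ} (hs : s ≤ k) :
    binomialMoment hW.toFinset (fun _ => ((Fintype.card Fq : ℝ) ^ k)⁻¹)
      (fun f => #{x ∈ D | f.eval x = 0}) s = (#D).choose s * (1 / (Fintype.card Fq : ℝ)) ^ s :=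
  binomialMoment_card_eq _ _ _ D (fun _ _ => filter_subset _ _) s _ fun _ hSD hS =>
    hS ▸ sum_hayesSet_vanishing hQ hε hD hW hSD (hS ▸ hs)

end HayesModel

theorem stmt0_general {Fq : Type*} [Field Fq] [Fintype Fq] [DecidableEq Fq]
    (q ℓ : ℕ) (hq : q = Fintype.card Fq)
    (Q : Polynomial Fq) (hQm : Q.Monic)
    (ε : Polynomial Fq) (hεm : ε.Monic) (hεQ : IsCoprime ε Q)
    (D : Finset Fq) (hD : ∀ x ∈ D, Q.eval x ≠ 0)
    (n : ℕ) (hn : n = D.card)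
    (k r : ℕ) (hrk : r ≤ k) :
    |probY ℓ Q ε D k r -
        (n.choose r : ℝ) * (1 / (q : ℝ)) ^ r * (1 - 1 / (q : ℝ)) ^ (n - r)| ≤
      2 / ((k - r).factorial : ℝ) * (n.choose r : ℝ) * (1 / (q : ℝ)) ^ r := by
  subst hq hn
  set p : ℝ := 1 / (Fintype.card Fq : ℝ)
  have hq : (0 : ℝ) < Fintype.card Fq := by exact_mod_cast Fintype.card_pos
  have hp : 0 ≤ 1 - p := by
    rw [sub_nonneg, div_le_one hq]
    exact_mod_cast Fintype.card_pos
  have hR : ε.reverse.coeff 0 = 1 := by rw [coeff_zero_reverse, hεm.leadingCoeff]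
  have hW := hayesSet_finite (ℓ := ℓ) (N := k + Q.natDegree + ℓ) ε hQm hR (by omega)
  have hclose := abs_sub_le_of_binomialMoment_eq (fun _ _ => by positivity)
    (fun _ _ => by positivity) r (k - r) fun s hs =>
      (binomialMoment_hayesSet hQm hεm hD hW (by omega)).trans (binomialMoment_powerset D p s).symm
  rw [Nat.add_sub_cancel' hrk, binomialMoment_hayesSet hQm hεm hD hW le_rfl,
    sum_powerset_card_eq, ← probY_eq_sum hεQ D k r hW, ← mul_assoc] at hclose
  refine hclose.trans ((choose_mul_choose_mul_inv_pow_le hq ?_ hrk).trans ?_)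
  · exact_mod_cast card_le_univ D
  · rw [show 2 / ((k - r).factorial : ℝ) * (#D).choose r * p ^ r =
      2 * ((#D).choose r * p ^ r / (k - r).factorial) by ring]
    exact le_mul_of_one_le_left (by positivity) one_le_two

theorem stmt0 {Fq : Type*} [Field Fq] [Fintype Fq] [DecidableEq Fq]
    (q t ℓ : ℕ) (hq : q = Fintype.card Fq)
    (Q : Polynomial Fq) (hQm : Q.Monic) (hQt : Q.natDegree = t)
    (ε : Polynomial Fq) (hεm : ε.Monic) (hεQ : IsCoprime ε Q)
    (D : Finset Fq) (hD : ∀ x ∈ D, Q.eval x ≠ 0)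
    (n : ℕ) (hn : n = D.card)
    (k r : ℕ) (hrk : r ≤ k) :
    |probY ℓ Q ε D k r -
        (n.choose r : ℝ) * (1 / (q : ℝ)) ^ r * (1 - 1 / (q : ℝ)) ^ (n - r)| ≤
      2 / ((k - r).factorial : ℝ) * (n.choose r : ℝ) * (1 / (q : ℝ)) ^ r :=
  stmt0_general q ℓ hq Q hQm ε hεm hεQ D hD n hn k r hrk
end
end

section
/- Let Q be monic of degree t over F_q, let ℓ ≥ 0, let ε be a Hayes class with respect to (ℓ,Q), and let D ⊆ F_q contain no zero of Q, with n = |D|. Then for all integers k ≥ 0 and j ≥ 0, Σ_{f ∈ M_{k+t+ℓ}(ε)} C(r(f), j) = [j ≤ k]·C(n,j)·q^{k−j} + [k+1 ≤ j ≤ k+t+ℓ]·W_j(ε), where [·] is 1 if the stated condition holds and 0 otherwise. Equivalently, the j-th binomial moment of Y_k(ε) is E[C(Y_k(ε), j)] = [j ≤ k]·C(n,j)·q^{−j} + [k+1 ≤ j ≤ k+t+ℓ]·q^{−k}·W_j(ε). -/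
open Polynomial

noncomputable section

/-- `W_j(ε)`: the number of pairs `(g, S)` with `g` monic of degree `d = k + t + ℓ - j`,
`S` a `j`-subset of `D`, and `g·∏_{α ∈ S}(x - α)` coprime to `Q` and in the class `ε`. -/
def Wcount {Fq : Type*} [Field Fq] [DecidableEq Fq] (ℓ : ℕ) (Q ε : Polynomial Fq)
    (D : Finset Fq) (d j : ℕ) : ℕ :=
  Nat.card {gS : Polynomial Fq × Finset Fq //
    gS.1.Monic ∧ gS.1.natDegree = d ∧ gS.2 ⊆ D ∧ gS.2.card = j ∧
    HayesEquiv ℓ Q ε (gS.1 * ∏ α ∈ gS.2, (X - C α))}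

namespace Stmt6Aux
variable {Fq : Type*} [Field Fq]

lemma coprime_X_sub_C' {p : Polynomial Fq} {α : Fq} (h : p.eval α ≠ 0) :
    IsCoprime (X - C α) p := by
  have hmod : p %ₘ (X - C α) = C (p.eval α) := modByMonic_X_sub_C_eq_C_eval p α
  have hdiv : p - (X - C α) * (p /ₘ (X - C α)) = C (p.eval α) := by
    rw [← hmod, modByMonic_eq_sub_mul_div _ (X - C α)]
  refine ⟨-C (p.eval α)⁻¹ * (p /ₘ (X - C α)), C (p.eval α)⁻¹, ?_⟩
  have hinv : C (p.eval α)⁻¹ * C (p.eval α) = 1 := by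
    rw [← C_mul, inv_mul_cancel₀ h, C_1]
  linear_combination hinv + C (p.eval α)⁻¹ * hdiv

lemma finite_setOf [Fintype Fq] (N : ℕ) (P : Polynomial Fq → Prop)
    (hP : ∀ f, P f → f.natDegree ≤ N) : {f : Polynomial Fq | P f}.Finite := by
  classical
  have h : Set.InjOn (fun f : Polynomial Fq => fun i : Fin (N + 1) => f.coeff i)
      {f : Polynomial Fq | P f} := by
    intro f hf g hg hfg
    ext i
    rcases le_or_gt i N with hi | hi
    · exact congrFun hfg ⟨i, by omega⟩
    · rw [coeff_eq_zero_of_natDegree_lt (lt_of_le_of_lt (hP f hf) hi),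
        coeff_eq_zero_of_natDegree_lt (lt_of_le_of_lt (hP g hg) hi)]
  exact Set.Finite.of_finite_image (Set.toFinite _) h

lemma finite_subtype [Fintype Fq] (N : ℕ) (P : Polynomial Fq → Prop)
    (hP : ∀ f, P f → f.natDegree ≤ N) : Finite {f : Polynomial Fq // P f} :=
  (finite_setOf N P hP).to_subtype

lemma nat_card_sigma {io : Type*} [Fintype io] (f : io → Type*) [∀ i, Finite (f i)] :
    Nat.card (Σ i, f i) = ∑ i, Nat.card (f i) := by
  letI : ∀ i, Fintype (f i) := fun i => Fintype.ofFinite _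
  simp [Nat.card_eq_fintype_card]

lemma count_lemma [Fintype Fq] (t ℓ : ℕ) (Q : Polynomial Fq) (hQm : Q.Monic) (hQt : Q.natDegree = t)
    (d : ℕ) (A B : Polynomial Fq) (hB : B.coeff 0 = 1) :
    Nat.card {g : Polynomial Fq // g.Monic ∧ g.natDegree = t + ℓ + d ∧
      (X : Polynomial Fq) ^ (ℓ + 1) ∣ g.reverse - B ∧ Q ∣ g - A} = (Fintype.card Fq) ^ d := by
  classical
  set m := t + ℓ + d with hm
  set Plow : Polynomial Fq := ∑ i ∈ Finset.range ℓ, C (B.coeff (i + 1)) * X ^ (m - (i + 1))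
    with hPlow
  set P : Polynomial Fq := X ^ m + Plow with hPdef
  have hQ0 : Q ≠ 0 := hQm.ne_zero
  have hQdeg : Q.degree = (t : WithBot ℕ) := by
    rw [degree_eq_natDegree hQ0, hQt]
  -- degree of Plow
  have hPlowdeg : Plow.degree < (m : WithBot ℕ) := by
    refine lt_of_le_of_lt (degree_sum_le _ _) ?_
    rw [Finset.sup_lt_iff (by exact WithBot.bot_lt_coe m)]
    intro i hi
    refine lt_of_le_of_lt (degree_C_mul_X_pow_le _ _) ?_
    rw [Finset.mem_range] at hi
    exact_mod_cast (by omega : m - (i + 1) < m)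
  -- coefficients of P in the top range
  have hPcoeff : ∀ i ≤ ℓ, P.coeff (m - i) = B.coeff i := by
    intro i hi
    rw [hPdef, coeff_add, coeff_X_pow, hPlow, finset_sum_coeff]
    rcases Nat.eq_zero_or_pos i with rfl | hipos
    · rw [Nat.sub_zero, if_pos rfl, hB]
      have : ∀ i' ∈ Finset.range ℓ, (C (B.coeff (i' + 1)) * X ^ (m - (i' + 1))).coeff m = 0 := by
        intro i' hi'
        rw [Finset.mem_range] at hi'
        rw [coeff_C_mul, coeff_X_pow, if_neg (by omega), mul_zero]
      rw [Finset.sum_eq_zero this, add_zero]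
    · rw [if_neg (by omega), zero_add]
      rw [Finset.sum_eq_single (i - 1)]
      · rw [coeff_C_mul, coeff_X_pow, if_pos (by omega), mul_one, Nat.sub_add_cancel hipos]
      · intro i' hi' hne
        rw [Finset.mem_range] at hi'
        rw [coeff_C_mul, coeff_X_pow, if_neg (by omega), mul_zero]
      · intro h
        exact absurd (Finset.mem_range.mpr (by omega)) h
  -- P is monic of degree m
  have hPmonic : P.Monic := monic_X_pow_add hPlowdeg
  have hPdeg : P.degree = (m : WithBot ℕ) := by
    rw [hPdef, degree_add_eq_left_of_degree_lt (by rw [degree_X_pow]; exact hPlowdeg),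
      degree_X_pow]
  have hPnat : P.natDegree = m := natDegree_eq_of_degree_eq_some hPdeg
  set Cr : Polynomial Fq := (A - P) %ₘ Q with hCrdef
  have hCrQ : A - P - Cr = Q * ((A - P) /ₘ Q) := by
    rw [hCrdef, modByMonic_eq_sub_mul_div _ Q]; ring
  have hCrdeg : Cr.degree < (t : WithBot ℕ) := by
    rw [← hQdeg]; exact degree_modByMonic_lt _ hQm
  -- the parametrizing map
  set e : Polynomial Fq → Polynomial Fq := fun u => P + Cr + Q * u with hedef
  have hlowdeg : ∀ u : Polynomial Fq, u.degree < (d : WithBot ℕ) →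
      (Plow + (Cr + Q * u)).degree < (m : WithBot ℕ) := by
    intro u hu
    have hQu : (Q * u).degree < ((t + d : ℕ) : WithBot ℕ) := by
      rcases eq_or_ne u 0 with rfl | hu0
      · rw [mul_zero, degree_zero]; exact WithBot.bot_lt_coe _
      · have hu' : u.natDegree < d := by
          rw [degree_eq_natDegree hu0] at hu; exact_mod_cast hu
        rw [degree_mul, hQdeg, degree_eq_natDegree hu0]
        exact_mod_cast (by omega : t + u.natDegree < t + d)
    refine lt_of_le_of_lt (degree_add_le _ _) (max_lt hPlowdeg ?_)
    refine lt_of_le_of_lt (degree_add_le _ _) (max_lt ?_ ?_)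
    · exact lt_of_lt_of_le hCrdeg (by exact_mod_cast (by omega : t ≤ m))
    · exact lt_of_lt_of_le hQu (by exact_mod_cast (by omega : t + d ≤ m))
  have hQudeg : ∀ u : Polynomial Fq, u.degree < (d : WithBot ℕ) →
      (Q * u).degree < ((t + d : ℕ) : WithBot ℕ) := by
    intro u hu
    rcases eq_or_ne u 0 with rfl | hu0
    · rw [mul_zero, degree_zero]; exact WithBot.bot_lt_coe _
    · have hu' : u.natDegree < d := by
        rw [degree_eq_natDegree hu0] at hu; exact_mod_cast hu
      rw [degree_mul, hQdeg, degree_eq_natDegree hu0]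
      exact_mod_cast (by omega : t + u.natDegree < t + d)
  have hedeg : ∀ u : Polynomial Fq, u.degree < (d : WithBot ℕ) →
      (e u).Monic ∧ (e u).natDegree = m := by
    intro u hu
    have hrw : e u = X ^ m + (Plow + (Cr + Q * u)) := by
      simp only [hedef, hPdef]; ring
    constructor
    · rw [hrw]; exact monic_X_pow_add (hlowdeg u hu)
    · rw [hrw]
      refine natDegree_eq_of_degree_eq_some ?_
      rw [degree_add_eq_left_of_degree_lt (by rw [degree_X_pow]; exact hlowdeg u hu),
        degree_X_pow]
  have hecoeff : ∀ u : Polynomial Fq, u.degree < (d : WithBot ℕ) → ∀ i ≤ ℓ,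
      (e u).coeff (m - i) = B.coeff i := by
    intro u hu i hi
    have h1 : Cr.coeff (m - i) = 0 :=
      coeff_eq_zero_of_degree_lt
        (lt_of_lt_of_le hCrdeg (by exact_mod_cast (by omega : t ≤ m - i)))
    have h2 : (Q * u).coeff (m - i) = 0 :=
      coeff_eq_zero_of_degree_lt
        (lt_of_lt_of_le (hQudeg u hu) (by exact_mod_cast (by omega : t + d ≤ m - i)))
    simp only [hedef, coeff_add]
    rw [h1, h2, add_zero, add_zero, hPcoeff i hi]
  have hmem : ∀ u : Polynomial Fq, u.degree < (d : WithBot ℕ) →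
      (e u).Monic ∧ (e u).natDegree = m ∧
        (X : Polynomial Fq) ^ (ℓ + 1) ∣ (e u).reverse - B ∧ Q ∣ e u - A := by
    intro u hu
    obtain ⟨hm1, hm2⟩ := hedeg u hu
    refine ⟨hm1, hm2, ?_, ?_⟩
    · rw [X_pow_dvd_iff]
      intro i hi
      rw [coeff_sub, coeff_reverse, hm2, revAt_le (by omega : i ≤ m),
        hecoeff u hu i (by omega), sub_self]
    · refine ⟨u - (A - P) /ₘ Q, ?_⟩
      simp only [hedef]
      linear_combination -hCrQ
  set F : degreeLT Fq d → {g : Polynomial Fq // g.Monic ∧ g.natDegree = m ∧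
      (X : Polynomial Fq) ^ (ℓ + 1) ∣ g.reverse - B ∧ Q ∣ g - A} :=
    fun u => ⟨e u.1, hmem u.1 (mem_degreeLT.mp u.2)⟩ with hF
  have hbij : Function.Bijective F := by
    constructor
    · rintro ⟨u, hu⟩ ⟨u', hu'⟩ h
      have h' := congrArg Subtype.val h
      simp only [hF, hedef] at h'
      have h'' : Q * u = Q * u' := by linear_combination h'
      exact Subtype.ext (mul_left_cancel₀ hQ0 h'')
    · rintro ⟨g, hg1, hg2, hg3, hg4⟩
      have hgc : ∀ i ≤ ℓ, g.coeff (m - i) = B.coeff i := by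
        intro i hi
        have h := (X_pow_dvd_iff.mp hg3) i (by omega)
        rwa [coeff_sub, coeff_reverse, hg2, revAt_le (by omega : i ≤ m), sub_eq_zero] at h
      have hgP : (g - P).degree < ((t + d : ℕ) : WithBot ℕ) := by
        rw [degree_lt_iff_coeff_zero]
        intro n hn
        rw [coeff_sub, sub_eq_zero]
        rcases le_or_gt n m with h1 | h1
        · have hn' : n = m - (m - n) := by omega
          rw [hn', hgc (m - n) (by omega), hPcoeff (m - n) (by omega)]
        · rw [coeff_eq_zero_of_natDegree_lt (by omega),
            coeff_eq_zero_of_natDegree_lt (by rw [hPnat]; omega)]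
      obtain ⟨w, hw⟩ : Q ∣ g - P - Cr := by
        obtain ⟨w, hw⟩ := hg4
        exact ⟨w + (A - P) /ₘ Q, by linear_combination hw + hCrQ⟩
      have hwdeg : w.degree < (d : WithBot ℕ) := by
        rcases eq_or_ne w 0 with rfl | hw0
        · rw [degree_zero]; exact WithBot.bot_lt_coe _
        · have hQw : (Q * w).degree < ((t + d : ℕ) : WithBot ℕ) := by
            rw [← hw]
            have : g - P - Cr = (g - P) - Cr := by ring
            rw [this]
            refine lt_of_le_of_lt (degree_sub_le _ _) (max_lt hgP ?_)
            exact lt_of_lt_of_le hCrdeg (by exact_mod_cast (by omega : t ≤ t + d))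
          rw [degree_mul, hQdeg, degree_eq_natDegree hw0] at hQw
          have h2 : t + w.natDegree < t + d := by exact_mod_cast hQw
          rw [degree_eq_natDegree hw0]
          exact_mod_cast (by omega : w.natDegree < d)
      refine ⟨⟨w, mem_degreeLT.mpr hwdeg⟩, Subtype.ext ?_⟩
      simp only [hF, hedef]
      linear_combination -hw
  rw [Nat.card_congr (Equiv.ofBijective F hbij).symm,
    Nat.card_congr (degreeLTEquiv Fq d).toEquiv]
  simp [Nat.card_eq_fintype_card]

lemma per_count [Fintype Fq] (t ℓ : ℕ) (Q : Polynomial Fq) (hQm : Q.Monic)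
    (hQt : Q.natDegree = t) (ε : Polynomial Fq) (hεm : ε.Monic) (hεQ : IsCoprime ε Q)
    (h : Polynomial Fq) (hhm : h.Monic) (hhQ : IsCoprime h Q) (d : ℕ) :
    Nat.card {g : Polynomial Fq // g.Monic ∧ g.natDegree = t + ℓ + d ∧
      HayesEquiv ℓ Q ε (g * h)} = (Fintype.card Fq) ^ d := by
  obtain ⟨u, v, huv⟩ := hhQ
  have hrevcop : IsCoprime h.reverse ((X : Polynomial Fq) ^ (ℓ + 1)) := by
    have h0 : h.reverse.eval 0 ≠ 0 := by
      rw [← coeff_zero_eq_eval_zero, coeff_zero_reverse, hhm.leadingCoeff]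
      exact one_ne_zero
    have hc := coprime_X_sub_C' h0
    rw [map_zero, sub_zero] at hc
    exact (hc.pow_left).symm
  obtain ⟨u', v', huv'⟩ := hrevcop
  have hu'0 : u'.coeff 0 = 1 := by
    have hc := congrArg (fun p => Polynomial.coeff p 0) huv'
    simp only [coeff_add, mul_coeff_zero, coeff_zero_reverse, hhm.leadingCoeff, mul_one,
      coeff_X_pow, if_neg (Nat.zero_ne_add_one ℓ), mul_zero, add_zero, coeff_one_zero] at hc
    exact hc
  have hB : (ε.reverse * u').coeff 0 = 1 := by
    rw [mul_coeff_zero, coeff_zero_reverse, hεm.leadingCoeff, one_mul, hu'0]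
  refine Eq.trans (Nat.card_congr (Equiv.subtypeEquivRight ?_))
    (count_lemma t ℓ Q hQm hQt d (ε * u) (ε.reverse * u') hB)
  intro g
  constructor
  · rintro ⟨hg1, hg2, hH⟩
    obtain ⟨hc1, hc2, hrev, hdvd⟩ := hH
    have hmul : (g * h).reverse = g.reverse * h.reverse :=
      reverse_mul (by rw [hg1.leadingCoeff, hhm.leadingCoeff, mul_one]; exact one_ne_zero)
    rw [hmul] at hrev
    obtain ⟨w, hw⟩ := hrev
    obtain ⟨w2, hw2⟩ := hdvd
    refine ⟨hg1, hg2, ⟨g.reverse * v' - u' * w, ?_⟩, ⟨g * v - u * w2, ?_⟩⟩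
    · linear_combination (-u') * hw + (-g.reverse) * huv'
    · linear_combination (-u) * hw2 + (-g) * huv
  · rintro ⟨hg1, hg2, h3, h4⟩
    obtain ⟨w, hw⟩ := h3
    obtain ⟨w2, hw2⟩ := h4
    have hmul : (g * h).reverse = g.reverse * h.reverse :=
      reverse_mul (by rw [hg1.leadingCoeff, hhm.leadingCoeff, mul_one]; exact one_ne_zero)
    have hQd : ε - g * h = Q * (ε * v - h * w2) := by
      linear_combination (-h) * hw2 + (-ε) * huv
    have hcop : IsCoprime (g * h) Q := by
      have hgh : g * h = ε + Q * (-(ε * v - h * w2)) := by linear_combination -hQd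
      rw [hgh]
      exact hεQ.add_mul_left_left _
    refine ⟨hg1, hg2, hεQ, hcop, ?_, ⟨ε * v - h * w2, hQd⟩⟩
    rw [hmul]
    exact ⟨ε.reverse * v' - h.reverse * w, by
      linear_combination (-h.reverse) * hw + (-ε.reverse) * huv'⟩

end Stmt6Aux

open Stmt6Aux in
/-- The `j`-th binomial moment of the number of distinct zeros in `D` of a random monic
polynomial of degree `k + t + ℓ` in the Hayes class of `ε`:
`∑_{f ∈ M_{k+t+ℓ}(ε)} C(r(f), j) = [j ≤ k]·C(n,j)·q^{k-j} + [k+1 ≤ j ≤ k+t+ℓ]·W_j(ε)`. -/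
theorem stmt6 {Fq : Type*} [Field Fq] [Fintype Fq] [DecidableEq Fq]
    (q t ℓ : ℕ) (hq : q = Fintype.card Fq)
    (Q : Polynomial Fq) (hQm : Q.Monic) (hQt : Q.natDegree = t)
    (ε : Polynomial Fq) (hεm : ε.Monic) (hεQ : IsCoprime ε Q)
    (D : Finset Fq) (hD : ∀ x ∈ D, Q.eval x ≠ 0)
    (n : ℕ) (hn : n = D.card)
    (k j : ℕ) :
    ∑ᶠ f ∈ {f : Polynomial Fq | f.Monic ∧ f.natDegree = k + t + ℓ ∧ HayesEquiv ℓ Q ε f},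
        ((D.filter fun x => Polynomial.eval x f = 0).card).choose j =
      (if j ≤ k then n.choose j * q ^ (k - j) else 0) +
        (if k + 1 ≤ j ∧ j ≤ k + t + ℓ then Wcount ℓ Q ε D (k + t + ℓ - j) j else 0) := by
  classical
  subst hq hn
  set N := k + t + ℓ with hN
  set Sset : Set (Polynomial Fq) :=
    {f : Polynomial Fq | f.Monic ∧ f.natDegree = N ∧ HayesEquiv ℓ Q ε f} with hSset
  have hfin : Sset.Finite :=
    finite_setOf N _ (fun f hf => le_of_eq hf.2.1)
  by_cases hjN : j ≤ N
  · -- LHS = Wcount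
    have key1 : ∑ᶠ f ∈ Sset, ((D.filter fun x => Polynomial.eval x f = 0).card).choose j
        = Wcount ℓ Q ε D (N - j) j := by
      rw [← hfin.coe_toFinset, finsum_mem_coe_finset]
      have hcongr : ∀ f ∈ hfin.toFinset,
          ((D.filter fun x => Polynomial.eval x f = 0).card).choose j
          = (Finset.powersetCard j (D.filter fun x => Polynomial.eval x f = 0)).card := by
        intro f _; rw [Finset.card_powersetCard]
      rw [Finset.sum_congr rfl hcongr, ← Finset.card_sigma, ← Nat.card_eq_finsetCard]
      simp only [Wcount]
      set T := hfin.toFinset with hT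
      set Φ : {gS : Polynomial Fq × Finset Fq //
          gS.1.Monic ∧ gS.1.natDegree = N - j ∧ gS.2 ⊆ D ∧ gS.2.card = j ∧
          HayesEquiv ℓ Q ε (gS.1 * ∏ α ∈ gS.2, (X - C α))} →
          {x : (_ : Polynomial Fq) × Finset Fq //
            x ∈ T.sigma fun f => Finset.powersetCard j
              (D.filter fun x => Polynomial.eval x f = 0)} :=
        fun p => ⟨⟨p.1.1 * ∏ α ∈ p.1.2, (X - C α), p.1.2⟩, by
          obtain ⟨⟨g, S⟩, hg1, hg2, hg3, hg4, hg5⟩ := p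
          simp only [Finset.mem_sigma]
          have hprodm : (∏ α ∈ S, (X - C α)).Monic :=
            monic_prod_of_monic _ _ fun α _ => monic_X_sub_C α
          have hdeg : (∏ α ∈ S, (X - C α)).natDegree = j := by
            rw [natDegree_prod _ _ fun α _ => X_sub_C_ne_zero α]
            simp [natDegree_X_sub_C, hg4]
          constructor
          · rw [hT, hfin.mem_toFinset]
            refine ⟨hg1.mul hprodm, ?_, hg5⟩
            rw [natDegree_mul hg1.ne_zero hprodm.ne_zero, hg2, hdeg]
            omega
          · rw [Finset.mem_powersetCard]
            refine ⟨fun α hα => ?_, hg4⟩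
            rw [Finset.mem_filter]
            refine ⟨hg3 hα, ?_⟩
            rw [eval_mul, eval_prod, Finset.prod_eq_zero hα (by simp), mul_zero]⟩ with hΦ
      have hbij : Function.Bijective Φ := by
        constructor
        · rintro ⟨⟨g, S⟩, hp⟩ ⟨⟨g', S'⟩, hp'⟩ hEq
          have hSS : S = S' := congrArg (fun x => x.val.2) hEq
          subst hSS
          have h2 : g * ∏ α ∈ S, (X - C α) = g' * ∏ α ∈ S, (X - C α) :=
            congrArg (fun x => x.val.1) hEq
          have hgg : g = g' := mul_right_cancel₀
            (monic_prod_of_monic _ _ fun α _ => monic_X_sub_C α).ne_zero h2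
          subst hgg; rfl
        · rintro ⟨⟨f, S⟩, hmem⟩
          rw [Finset.mem_sigma] at hmem
          obtain ⟨hmem1, hmem2⟩ := hmem
          rw [hT, hfin.mem_toFinset] at hmem1
          obtain ⟨hf1, hf2, hf3⟩ := hmem1
          rw [Finset.mem_powersetCard] at hmem2
          obtain ⟨hSsub, hScard⟩ := hmem2
          have hdvd : (∏ α ∈ S, (X - C α)) ∣ f := by
            refine Finset.prod_dvd_of_coprime ?_ fun α hα => ?_
            · intro α hα β hβ hne
              exact coprime_X_sub_C' (by simp [sub_ne_zero, hne])
            · rw [dvd_iff_isRoot]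
              exact (Finset.mem_filter.mp (hSsub hα)).2
          obtain ⟨c, hc⟩ := hdvd
          have hprodm : (∏ α ∈ S, (X - C α)).Monic :=
            monic_prod_of_monic _ _ fun α _ => monic_X_sub_C α
          have hdegp : (∏ α ∈ S, (X - C α)).natDegree = j := by
            rw [natDegree_prod _ _ fun α _ => X_sub_C_ne_zero α]
            simp [natDegree_X_sub_C, hScard]
          have hcm : c.Monic := hprodm.of_mul_monic_left (hc ▸ hf1)
          have hcd : c.natDegree = N - j := by
            have hh := natDegree_mul hprodm.ne_zero hcm.ne_zero
            rw [← hc, hf2, hdegp] at hh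
            omega
          refine ⟨⟨(c, S), hcm, hcd, fun α hα => (Finset.mem_filter.mp (hSsub hα)).1,
            hScard, ?_⟩, ?_⟩
          · rw [mul_comm, ← hc]; exact hf3
          · apply Subtype.ext
            simp only [hΦ]
            have hcf : c * ∏ α ∈ S, (X - C α) = f := by rw [mul_comm, ← hc]
            rw [hcf]
      exact Nat.card_congr (Equiv.ofBijective Φ hbij).symm
    rw [key1]
    by_cases hjk : j ≤ k
    · -- evaluate Wcount
      have key2 : Wcount ℓ Q ε D (N - j) j
          = D.card.choose j * Fintype.card Fq ^ (k - j) := by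
        simp only [Wcount]
        haveI hfint : ∀ S : {S : Finset Fq // S ∈ D.powersetCard j},
            Finite {g : Polynomial Fq // g.Monic ∧ g.natDegree = N - j ∧
              HayesEquiv ℓ Q ε (g * ∏ α ∈ S.1, (X - C α))} :=
          fun S => finite_subtype (N - j) _ (fun g hg => le_of_eq hg.2.1)
        have e : {gS : Polynomial Fq × Finset Fq //
            gS.1.Monic ∧ gS.1.natDegree = N - j ∧ gS.2 ⊆ D ∧ gS.2.card = j ∧
            HayesEquiv ℓ Q ε (gS.1 * ∏ α ∈ gS.2, (X - C α))} ≃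
            (Σ S : {S : Finset Fq // S ∈ D.powersetCard j},
              {g : Polynomial Fq // g.Monic ∧ g.natDegree = N - j ∧
                HayesEquiv ℓ Q ε (g * ∏ α ∈ S.1, (X - C α))}) :=
          { toFun := fun p => ⟨⟨p.1.2, Finset.mem_powersetCard.mpr
              ⟨p.2.2.2.1, p.2.2.2.2.1⟩⟩, ⟨p.1.1, p.2.1, p.2.2.1, p.2.2.2.2.2⟩⟩
            invFun := fun σ => ⟨(σ.2.1, σ.1.1), σ.2.2.1, σ.2.2.2.1,
              (Finset.mem_powersetCard.mp σ.1.2).1,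
              (Finset.mem_powersetCard.mp σ.1.2).2, σ.2.2.2.2⟩
            left_inv := fun p => rfl
            right_inv := fun σ => rfl }
        rw [Nat.card_congr e, nat_card_sigma]
        have hNj : N - j = t + ℓ + (k - j) := by omega
        have hval : ∀ S : {S : Finset Fq // S ∈ D.powersetCard j},
            Nat.card {g : Polynomial Fq // g.Monic ∧ g.natDegree = N - j ∧
              HayesEquiv ℓ Q ε (g * ∏ α ∈ S.1, (X - C α))}
            = Fintype.card Fq ^ (k - j) := by
          intro S
          obtain ⟨hSsub, hScard⟩ := Finset.mem_powersetCard.mp S.2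
          have hprodm : (∏ α ∈ S.1, (X - C α)).Monic :=
            monic_prod_of_monic _ _ fun α _ => monic_X_sub_C α
          have hcop : IsCoprime (∏ α ∈ S.1, (X - C α)) Q :=
            IsCoprime.prod_left fun α hα => coprime_X_sub_C' (hD α (hSsub hα))
          rw [hNj]
          exact per_count t ℓ Q hQm hQt ε hεm hεQ _ hprodm hcop (k - j)
        rw [Finset.sum_congr rfl (fun S _ => hval S)]
        simp [Finset.card_univ, Finset.card_powersetCard, mul_comm]
      rw [if_pos hjk, if_neg (by omega), key2, add_zero]
    · rw [if_neg hjk, if_pos ⟨by omega, hjN⟩, zero_add]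
  · -- all terms vanish
    have hzero : ∀ f ∈ Sset,
        ((D.filter fun x => Polynomial.eval x f = 0).card).choose j = 0 := by
      intro f hf
      refine Nat.choose_eq_zero_of_lt ?_
      have hsub : (D.filter fun x => Polynomial.eval x f = 0) ⊆ f.roots.toFinset := by
        intro x hx
        rw [Finset.mem_filter] at hx
        rw [Multiset.mem_toFinset, mem_roots hf.1.ne_zero]
        exact hx.2
      calc (D.filter fun x => Polynomial.eval x f = 0).card
          ≤ f.roots.toFinset.card := Finset.card_le_card hsub
        _ ≤ Multiset.card f.roots := Multiset.toFinset_card_le _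
        _ ≤ f.natDegree := card_roots' f
        _ = N := hf.2.1
        _ < j := by omega
    rw [finsum_mem_congr rfl hzero, if_neg (by omega), if_neg (by omega)]
    simp
end
end

section
/- Let Q be monic of degree t over F_q and let ℓ ≥ 0. For every Hayes class ε with respect to (ℓ,Q) and every integer k ≥ 0, the number of monic polynomials of degree k+t+ℓ over F_q lying in the class ε equals q^k. -/
open Polynomial

noncomputable section

/-!
For `f` of degree `n ≥ ℓ`, the condition `X ^ (ℓ + 1) ∣ ε̂ - f̂` prescribes the top `ℓ + 1`
coefficients of `f`. A monic `f₀` of degree `n = k + t + ℓ` in the class of `ε` exists: fix its top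
coefficients, then add the remainder modulo `Q`, which has degree `< t` and so leaves them alone.
Any other member `f` of degree `n` differs from `f₀` by a multiple of `Q` of degree `< t + k`, so
the class members of degree `n` are exactly the `f₀ + Q s` with `deg s < k`: there are `q ^ k`.
-/

namespace Polynomial

theorem X_pow_succ_dvd_reflect_iff {R : Type*} [Semiring R] {p : R[X]} {m ℓ : ℕ}
    (hp : p.natDegree ≤ m + ℓ) : X ^ (ℓ + 1) ∣ p.reflect (m + ℓ) ↔ p.degree < m := by
  simp only [X_pow_dvd_iff, degree_lt_iff_coeff_zero, coeff_reflect]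
  constructor
  · intro h j hj
    rcases le_or_gt j (m + ℓ) with hj' | hj'
    · have := h (m + ℓ - j) (by omega)
      rwa [revAt_le (by omega), Nat.sub_sub_self hj'] at this
    · exact coeff_eq_zero_of_natDegree_lt (by omega)
  · intro h d hd
    rw [revAt_le (by omega)]
    exact h _ (by omega)

theorem X_pow_succ_dvd_reverse_sub_iff {R : Type*} [Ring R] {f g : R[X]} {m ℓ : ℕ}
    (hf : f.natDegree = m + ℓ) (hg : g.natDegree = m + ℓ) :
    X ^ (ℓ + 1) ∣ f.reverse - g.reverse ↔ (f - g).degree < m := by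
  rw [reverse, reverse, hf, hg, ← reflect_sub]
  exact X_pow_succ_dvd_reflect_iff ((natDegree_sub_le_of_le hf.le hg.le).trans (max_self _).le)

theorem Monic.degree_mul_lt_iff {R : Type*} [Semiring R] [Nontrivial R] {Q : R[X]}
    (hQ : Q.Monic) {s : R[X]} {k : ℕ} :
    (Q * s).degree < (Q.natDegree + k : ℕ) ↔ s.degree < k := by
  rw [hQ.degree_mul_comm, hQ.degree_mul, degree_eq_natDegree hQ.ne_zero, add_comm, Nat.cast_add,
    WithBot.add_lt_add_iff_left (WithBot.natCast_ne_bot _)]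

theorem exists_monic_natDegree_X_pow_dvd_reverse_sub {R : Type*} [Ring R] [Nontrivial R]
    {p : R[X]} (hp : p.Monic) {ℓ n : ℕ} (hℓn : ℓ ≤ n) :
    ∃ T : R[X], T.Monic ∧ T.natDegree = n ∧ X ^ (ℓ + 1) ∣ p.reverse - T.reverse := by
  obtain ⟨r, hr⟩ : ∃ r : R[X], r = p.reverse %ₘ X ^ (ℓ + 1) := ⟨_, rfl⟩
  have hr_dvd : X ^ (ℓ + 1) ∣ p.reverse - r :=
    ⟨p.reverse /ₘ X ^ (ℓ + 1), by rw [hr, modByMonic_eq_sub_mul_div, sub_sub_cancel]⟩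
  have hr_coeff : r.coeff 0 = 1 := by
    have := X_pow_dvd_iff.mp hr_dvd 0 (by omega)
    rwa [coeff_sub, coeff_zero_reverse, hp.leadingCoeff, sub_eq_zero, eq_comm] at this
  have hr_natDegree : r.natDegree ≤ ℓ := by
    have := degree_modByMonic_lt p.reverse (monic_X_pow (R := R) (ℓ + 1))
    rw [← hr, degree_X_pow, ← natDegree_lt_iff_degree_lt (by rintro rfl; simp at hr_coeff)] at this
    omega
  have hT_le : (r.reflect n).natDegree ≤ n := natDegree_reflect_le.trans (by omega)
  have hT_coeff : (r.reflect n).coeff n = 1 := by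
    rw [coeff_reflect, revAt_le le_rfl, Nat.sub_self, hr_coeff]
  have hT_natDegree : (r.reflect n).natDegree = n :=
    natDegree_eq_of_le_of_coeff_ne_zero hT_le (by rw [hT_coeff]; exact one_ne_zero)
  refine ⟨r.reflect n, monic_of_natDegree_le_of_coeff_eq_one n hT_le hT_coeff, hT_natDegree, ?_⟩
  rwa [show (r.reflect n).reverse = r by rw [reverse, hT_natDegree, reflect_reflect]]

theorem card_degreeLT (R : Type*) [Semiring R] (k : ℕ) :
    Nat.card (degreeLT R k) = Nat.card R ^ k := by
  rw [Nat.card_congr (degreeLTEquiv R k).toEquiv, Nat.card_fun, Nat.card_fin]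

end Polynomial

section HayesEquiv

variable {K : Type*} [Field K] {ℓ : ℕ} {Q ε f f₀ : K[X]}

theorem hayesEquiv_of_dvd (hεQ : IsCoprime ε Q) (hrev : X ^ (ℓ + 1) ∣ ε.reverse - f.reverse)
    (hQ : Q ∣ ε - f) : HayesEquiv ℓ Q ε f := by
  obtain ⟨c, hc⟩ := hQ
  refine ⟨hεQ, ?_, hrev, c, hc⟩
  rw [show f = ε + Q * -c by linear_combination -hc]
  exact hεQ.add_mul_left_left _

theorem hayesEquiv_iff_of_hayesEquiv (h₀ : HayesEquiv ℓ Q ε f₀) :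
    HayesEquiv ℓ Q ε f ↔ X ^ (ℓ + 1) ∣ f₀.reverse - f.reverse ∧ Q ∣ f₀ - f := by
  obtain ⟨hεQ, -, hrev₀, hQ₀⟩ := h₀
  constructor
  · rintro ⟨-, -, hrev, hQ⟩
    exact ⟨by simpa only [sub_sub_sub_cancel_left] using dvd_sub hrev hrev₀,
      by simpa only [sub_sub_sub_cancel_left] using dvd_sub hQ hQ₀⟩
  · rintro ⟨hrev, hQ⟩
    exact hayesEquiv_of_dvd hεQ (by simpa only [sub_add_sub_cancel] using dvd_add hrev₀ hrev)
      (by simpa only [sub_add_sub_cancel] using dvd_add hQ₀ hQ)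

theorem exists_monic_natDegree_hayesEquiv (hQ : Q.Monic) (hε : ε.Monic) (hεQ : IsCoprime ε Q)
    {n : ℕ} (hn : Q.natDegree + ℓ ≤ n) : ∃ f, f.Monic ∧ f.natDegree = n ∧ HayesEquiv ℓ Q ε f := by
  obtain ⟨T, hTm, hTn, hT⟩ :=
    exists_monic_natDegree_X_pow_dvd_reverse_sub hε (ℓ := ℓ) (n := n) (by omega)
  obtain ⟨r, hr⟩ : ∃ r : K[X], r = (ε - T) %ₘ Q := ⟨_, rfl⟩
  have hr_deg : r.degree < (n - ℓ : ℕ) := by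
    rw [hr]
    refine (degree_modByMonic_lt _ hQ).trans_le ?_
    rw [degree_eq_natDegree hQ.ne_zero]
    exact_mod_cast (by omega)
  have hrT : r.degree < T.degree :=
    hr_deg.trans_le (by rw [degree_eq_natDegree hTm.ne_zero, hTn]; exact_mod_cast (by omega))
  have hfn : (T + r).natDegree = n := by rw [natDegree_add_eq_left_of_degree_lt hrT, hTn]
  refine ⟨T + r, hTm.add_of_left hrT, hfn, hayesEquiv_of_dvd hεQ ?_ ?_⟩
  · have hT_sub : X ^ (ℓ + 1) ∣ T.reverse - (T + r).reverse := by
      rw [X_pow_succ_dvd_reverse_sub_iff (m := n - ℓ) (hTn.trans (by omega)) (hfn.trans (by omega)),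
        sub_add_cancel_left, degree_neg]
      exact hr_deg
    simpa only [sub_add_sub_cancel] using dvd_add hT hT_sub
  · exact ⟨(ε - T) /ₘ Q, by rw [hr, modByMonic_eq_sub_mul_div]; ring⟩

theorem setOf_monic_natDegree_hayesEquiv_eq_image (hQ : Q.Monic) {k : ℕ} (hf₀m : f₀.Monic)
    (hf₀n : f₀.natDegree = k + Q.natDegree + ℓ) (h₀ : HayesEquiv ℓ Q ε f₀) :
    {f | f.Monic ∧ f.natDegree = k + Q.natDegree + ℓ ∧ HayesEquiv ℓ Q ε f} =
      (fun s => f₀ + Q * s) '' degreeLT K k := by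
  have hf₀n' : f₀.natDegree = (Q.natDegree + k) + ℓ := hf₀n.trans (by ring)
  ext f
  simp only [Set.mem_ofPred_eq, Set.mem_image, SetLike.mem_coe, mem_degreeLT,
    hayesEquiv_iff_of_hayesEquiv h₀]
  constructor
  · rintro ⟨-, hfn, hrev, s, hs⟩
    rw [X_pow_succ_dvd_reverse_sub_iff hf₀n' (hfn.trans (by ring)), hs,
      hQ.degree_mul_lt_iff] at hrev
    exact ⟨-s, by rwa [degree_neg], by rw [mul_neg, ← hs]; ring⟩
  · rintro ⟨s, hs, rfl⟩
    have hQs : (Q * s).degree < f₀.degree := by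
      refine (hQ.degree_mul_lt_iff.2 hs).trans_le ?_
      rw [degree_eq_natDegree hf₀m.ne_zero, hf₀n']
      exact_mod_cast (by omega)
    have hfn : (f₀ + Q * s).natDegree = k + Q.natDegree + ℓ := by
      rw [natDegree_add_eq_left_of_degree_lt hQs, hf₀n]
    refine ⟨hf₀m.add_of_left hQs, hfn, ?_, -s, by ring⟩
    rw [X_pow_succ_dvd_reverse_sub_iff hf₀n' (hfn.trans (by ring)), sub_add_cancel_left, degree_neg,
      hQ.degree_mul_lt_iff]
    exact hs

end HayesEquiv

/-- The number of monic polynomials of degree `k + t + ℓ` in a given Hayes class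
equals `q^k`. -/
theorem stmt14 {Fq : Type*} [Field Fq] [Fintype Fq]
    (q t ℓ : ℕ) (hq : q = Fintype.card Fq)
    (Q : Polynomial Fq) (hQm : Q.Monic) (hQt : Q.natDegree = t)
    (ε : Polynomial Fq) (hεm : ε.Monic) (hεQ : IsCoprime ε Q)
    (k : ℕ) :
    Nat.card {f : Polynomial Fq // f.Monic ∧ f.natDegree = k + t + ℓ ∧
        HayesEquiv ℓ Q ε f} = q ^ k := by
  subst hq hQt
  obtain ⟨f₀, hf₀m, hf₀n, h₀⟩ :=
    exists_monic_natDegree_hayesEquiv (ℓ := ℓ) (n := k + Q.natDegree + ℓ) hQm hεm hεQ (by omega)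
  have hinj : Function.Injective fun s => f₀ + Q * s :=
    fun s s' h => mul_left_cancel₀ hQm.ne_zero (add_left_cancel h)
  rw [← Set.coe_ofPred, setOf_monic_natDegree_hayesEquiv_eq_image hQm hf₀m hf₀n h₀,
    Nat.card_image_of_injective hinj, ← Nat.card_eq_fintype_card]
  exact card_degreeLT Fq k
end
end

section
/- Let D be a finite set, let j ≥ 1 be an integer, and let h be a complex-valued function on D^j. Let X̄ denote the set of j-tuples (x_1,…,x_j) ∈ D^j with pairwise distinct entries, and for a permutation τ of {1,…,j} let X_τ = {(x_1,…,x_j) ∈ D^j : x_i = x_k whenever i and k lie in the same cycle of τ}. Then Σ_{x ∈ X̄} h(x) = Σ_{τ ∈ S_j} (−1)^{j − l(τ)} · Σ_{x ∈ X_τ} h(x), where l(τ) denotes the number of cycles of τ (fixed points included). -/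
/-!
A tuple `x` is constant on the cycles of `τ` iff `x ∘ τ = x`, and `(-1) ^ (j - l(τ)) = sign τ`.
Exchanging the two sums on the right, the coefficient of `h x` becomes the sum of the signs
over the stabiliser of `x`. That is `1` when `x` is injective, the stabiliser being trivial, and
`0` otherwise: if `x a = x b` with `a ≠ b`, left multiplication by the transposition `(a b)` is a
sign-reversing bijection of the stabiliser.
-/

noncomputable section

/-- `l(τ)`: the number of cycles of a permutation (fixed points included). -/
def numCycles {j : ℕ} (τ : Equiv.Perm (Fin j)) : ℕ :=
  Multiset.card τ.cycleType + (Finset.univ.filter fun x => τ x = x).card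

section

open Finset Function

namespace Equiv.Perm

variable {ι α : Type*}

theorem forall_sameCycle_imp_eq_iff_comp_eq [Finite ι] (τ : Perm ι) (x : ι → α) :
    (∀ i k, τ.SameCycle i k → x i = x k) ↔ x ∘ τ = x := by
  refine ⟨fun H => funext fun i => (H i (τ i) ⟨1, by simp⟩).symm, fun H i k hik => ?_⟩
  obtain ⟨n, -, rfl⟩ := hik.exists_nat_pow_eq
  have hsemi : Semiconj x τ id := congrFun H
  simpa [coe_pow] using (hsemi.iterate_right n i).symm

variable [Fintype ι] [DecidableEq ι] [DecidableEq α]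

theorem sum_sign_filter_comp_eq_of_injective {x : ι → α} (hx : Injective x) :
    ∑ τ ∈ univ.filter (fun τ : Perm ι => x ∘ τ = x), (sign τ : ℤ) = 1 := by
  have hstab : univ.filter (fun τ : Perm ι => x ∘ τ = x) = {1} := by
    ext τ
    simp only [mem_filter, mem_univ, true_and, mem_singleton]
    exact ⟨fun h => Perm.ext fun i => hx (congrFun h i), fun h => h ▸ rfl⟩
  simp [hstab]

theorem sum_sign_filter_comp_eq_of_not_injective {x : ι → α} (hx : ¬Injective x) :
    ∑ τ ∈ univ.filter (fun τ : Perm ι => x ∘ τ = x), (sign τ : ℤ) = 0 := by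
  obtain ⟨a, b, hab, hne⟩ := not_injective_iff.mp hx
  have hswap : x ∘ swap a b = x := by
    rw [comp_swap_eq_update, hab, update_eq_self, ← hab, update_eq_self]
  have hflip : ∑ τ ∈ univ.filter (fun τ : Perm ι => x ∘ τ = x), (sign τ : ℤ) =
      ∑ τ ∈ univ.filter (fun τ : Perm ι => x ∘ τ = x), -(sign τ : ℤ) := by
    refine sum_equiv (Equiv.mulLeft (swap a b)) (fun τ => ?_) (fun τ _ => ?_)
    · simp [coe_mul, ← comp_assoc, hswap]
    · simp [sign_swap hne]
  rw [sum_neg_distrib] at hflip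
  omega

theorem sum_sign_filter_comp_eq (x : ι → α) :
    ∑ τ ∈ univ.filter (fun τ : Perm ι => x ∘ τ = x), (sign τ : ℤ) =
      if Injective x then 1 else 0 := by
  split_ifs with hx
  · exact sum_sign_filter_comp_eq_of_injective hx
  · exact sum_sign_filter_comp_eq_of_not_injective hx

theorem sum_filter_injective_eq_sum_sign_zsmul {M : Type*} [AddCommGroup M]
    (s : Finset (ι → α)) (h : (ι → α) → M) :
    ∑ x ∈ s with Injective x, h x =
      ∑ τ : Perm ι, (sign τ : ℤ) • ∑ x ∈ s with x ∘ τ = x, h x :=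
  calc ∑ x ∈ s with Injective x, h x
      = ∑ x ∈ s, (if Injective x then 1 else 0 : ℤ) • h x := by
        simp only [sum_filter, ite_smul, one_smul, zero_smul]
    _ = ∑ x ∈ s, ∑ τ : Perm ι, (if x ∘ τ = x then (sign τ : ℤ) else 0) • h x := by
        simp only [← sum_sign_filter_comp_eq, sum_filter, sum_smul]
    _ = ∑ τ : Perm ι, (sign τ : ℤ) • ∑ x ∈ s with x ∘ τ = x, h x := by
        rw [sum_comm]
        simp only [smul_sum, sum_filter, ite_smul, smul_ite, zero_smul, smul_zero]

theorem sign_eq_neg_one_pow_sub_numCycles {j : ℕ} (τ : Perm (Fin j)) :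
    sign τ = (-1) ^ (j - numCycles τ) := by
  have hfix : #{i | τ i = i} = j - #τ.support := by
    have : ({i | τ i = i} : Finset (Fin j)) = τ.supportᶜ := by
      ext i
      simp
    rw [this, card_compl, Fintype.card_fin]
  have hcard : Multiset.card τ.cycleType ≤ τ.cycleType.sum := by
    simpa using Multiset.card_nsmul_le_sum fun _ hn =>
      one_le_two.trans (two_le_of_mem_cycleType hn)
  have hexp : τ.cycleType.sum + Multiset.card τ.cycleType =
      (j - numCycles τ) + 2 * Multiset.card τ.cycleType := by
    have := τ.sum_cycleType_le
    rw [Fintype.card_fin] at this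
    rw [numCycles, hfix, ← sum_cycleType]
    omega
  rw [sign_of_cycleType, hexp, pow_add, pow_mul]
  simp

end Equiv.Perm

end

theorem stmt18_general {α : Type*} (D : Finset α) (j : ℕ)
    (h : (Fin j → α) → ℂ) :
    ∑ᶠ x ∈ {x : Fin j → α | (∀ i, x i ∈ D) ∧ Function.Injective x}, h x =
      ∑ τ : Equiv.Perm (Fin j), (-1 : ℂ) ^ (j - numCycles τ) *
        ∑ᶠ x ∈ {x : Fin j → α | (∀ i, x i ∈ D) ∧
            ∀ i k : Fin j, τ.SameCycle i k → x i = x k}, h x := by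
  classical
  have hcoe (P : (Fin j → α) → Prop) [DecidablePred P] :
      {x : Fin j → α | (∀ i, x i ∈ D) ∧ P x} =
        ↑({x ∈ Fintype.piFinset fun _ : Fin j => D | P x}) := by
    ext x
    simp
  simp_rw [Equiv.Perm.forall_sameCycle_imp_eq_iff_comp_eq, hcoe, finsum_mem_coe_finset,
    Equiv.Perm.sum_filter_injective_eq_sum_sign_zsmul,
    Equiv.Perm.sign_eq_neg_one_pow_sub_numCycles, zsmul_eq_mul]
  push_cast
  rfl

/-- The Li–Wan coordinate-sieve formula: summing `h` over tuples from `D` with pairwise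
distinct coordinates equals the signed sum over permutations `τ` of the sums of `h` over
tuples that are constant on each cycle of `τ`. -/
theorem stmt18 {α : Type*} (D : Finset α) (j : ℕ) (hj : 1 ≤ j)
    (h : (Fin j → α) → ℂ) :
    ∑ᶠ x ∈ {x : Fin j → α | (∀ i, x i ∈ D) ∧ Function.Injective x}, h x =
      ∑ τ : Equiv.Perm (Fin j), (-1 : ℂ) ^ (j - numCycles τ) *
        ∑ᶠ x ∈ {x : Fin j → α | (∀ i, x i ∈ D) ∧
            ∀ i k : Fin j, τ.SameCycle i k → x i = x k}, h x :=
  stmt18_general D j h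
end
end
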